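/- arXiv:1604.08858 — 6 statements merged into one kernel-verified Lean document; each statement's English description precedes it below -/
import Mathlib

section
/- Let θ be an irrational real number and α any real number. For every δ > 0 there exist integers p and q such that |pθ − q − α| < δ. -/
theorem stmt_7 (θ α : ℝ) (hθ : Irrational θ) :
    ∀ δ > 0, ∃ p q : ℤ, |(p : ℝ) * θ - q - α| < δ := by
  intro δ hδ
  set S : AddSubgroup ℝ := AddSubgroup.closure {θ, 1} with hS
  have hdense : Dense (S : Set ℝ) := by
    rcases S.dense_or_cyclic with h | ⟨a, ha⟩
    · exact h
    · exfalso
      have hθS : θ ∈ S := AddSubgroup.subset_closure (by simp)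
      have h1S : (1 : ℝ) ∈ S := AddSubgroup.subset_closure (by simp)
      rw [ha, AddSubgroup.mem_closure_singleton] at hθS h1S
      obtain ⟨n, hn⟩ := hθS
      obtain ⟨m, hm⟩ := h1S
      have hm0 : (m : ℝ) ≠ 0 := by
        intro h0
        rw [zsmul_eq_mul, h0, zero_mul] at hm
        exact one_ne_zero hm.symm
      refine hθ ⟨(n : ℚ) / m, ?_⟩
      rw [zsmul_eq_mul] at hn hm
      push_cast
      rw [div_eq_iff hm0, ← hn, mul_assoc, mul_comm a, hm, mul_one]
  have := Metric.mem_closure_iff.mp (hdense α) δ hδ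
  obtain ⟨b, hbS, hb⟩ := this
  rw [SetLike.mem_coe, hS, AddSubgroup.mem_closure_pair] at hbS
  obtain ⟨p, q, hpq⟩ := hbS
  refine ⟨p, -q, ?_⟩
  rw [Real.dist_eq, abs_sub_comm] at hb
  have : (p : ℝ) * θ - (-q : ℤ) = b := by
    rw [← hpq]; push_cast; rw [zsmul_eq_mul, zsmul_eq_mul]; ring
  rw [this]
  exact hb
end

section
/- Let A be a real symmetric matrix such that exp(−iηA) e_w = γ e_v for some unit complex γ and standard basis vectors e_v, e_w. Then for every integer n, |e_vᵀ exp(−i(2n+1)η A) e_w| = |e_vᵀ exp(−i·2nη·A) e_v|, and in particular if additionally exp(−2iηA) = μ I for some unit complex μ, then |e_vᵀ exp(−i(2n+1)η A) e_w| = 1 for all integers n. -/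
open Matrix

theorem stmt_9 (N : ℕ) (A : Matrix (Fin N) (Fin N) ℝ) (hA : A.IsSymm)
    (v w : Fin N) (η : ℝ) (γ : ℂ) (hγ : ‖γ‖ = 1)
    (hpst : NormedSpace.exp ((-(Complex.I * η)) • A.map (fun x => (x : ℂ))) *ᵥ
        (Pi.single w 1 : Fin N → ℂ) = γ • (Pi.single v 1 : Fin N → ℂ)) :
    (∀ n : ℤ,
      ‖(Pi.single v 1 : Fin N → ℂ) ⬝ᵥ
        (NormedSpace.exp ((-(Complex.I * ((2 * n + 1) * η))) • A.map (fun x => (x : ℂ))) *ᵥ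
          (Pi.single w 1 : Fin N → ℂ))‖ =
      ‖(Pi.single v 1 : Fin N → ℂ) ⬝ᵥ
        (NormedSpace.exp ((-(Complex.I * (2 * n * η))) • A.map (fun x => (x : ℂ))) *ᵥ
          (Pi.single v 1 : Fin N → ℂ))‖) ∧
    (∀ μ : ℂ, ‖μ‖ = 1 →
      NormedSpace.exp ((-(Complex.I * (2 * η))) • A.map (fun x => (x : ℂ))) = μ • 1 →
      ∀ n : ℤ,
        ‖(Pi.single v 1 : Fin N → ℂ) ⬝ᵥ
          (NormedSpace.exp ((-(Complex.I * ((2 * n + 1) * η))) • A.map (fun x => (x : ℂ))) *ᵥ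
            (Pi.single w 1 : Fin N → ℂ))‖ = 1) := by
  set M : Matrix (Fin N) (Fin N) ℂ := A.map (fun x => (x : ℂ)) with hM
  have hcomm : ∀ s t : ℂ, Commute (s • M) (t • M) := fun s t =>
    ((Commute.refl M).smul_left s).smul_right t
  have hmul : ∀ s t : ℂ, NormedSpace.exp ((s + t) • M) =
      NormedSpace.exp (s • M) * NormedSpace.exp (t • M) := by
    intro s t
    rw [add_smul]
    exact Matrix.exp_add_of_commute _ _ (hcomm s t)
  constructor
  · intro n
    have h1 : (-(Complex.I * ((2 * (n : ℂ) + 1) * (η : ℂ))))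
        = (-(Complex.I * (2 * (n : ℂ) * η))) + (-(Complex.I * η)) := by ring
    rw [h1, hmul, ← Matrix.mulVec_mulVec, hpst, Matrix.mulVec_smul, dotProduct_smul,
      smul_eq_mul, norm_mul, hγ, one_mul]
  · intro μ hμ hexp n
    have hμ0 : μ ≠ 0 := by intro h; simp [h] at hμ
    set c : ℂ := -(Complex.I * (2 * η)) with hc
    have hc1 : NormedSpace.exp (c • M) = μ • 1 := hexp
    have hneg : NormedSpace.exp ((-c) • M) = μ⁻¹ • 1 := by
      have h0 : NormedSpace.exp (c • M) * NormedSpace.exp ((-c) • M) = 1 := by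
        rw [← hmul, add_neg_cancel, zero_smul, NormedSpace.exp_zero]
      rw [hc1, smul_mul_assoc, one_mul] at h0
      rw [← inv_smul_smul₀ hμ0 (NormedSpace.exp ((-c) • M)), h0]
    have hzpow : ∀ m : ℤ, NormedSpace.exp (((m : ℂ) * c) • M) = μ ^ m • 1 := by
      intro m
      induction m using Int.induction_on with
      | zero => simp [NormedSpace.exp_zero]
      | succ k ih =>
          have h2 : (((k : ℤ) + 1 : ℤ) : ℂ) * c = ((k : ℤ) : ℂ) * c + c := by
            push_cast; ring
          rw [h2, hmul, ih, hc1, smul_mul_assoc, mul_smul_comm, one_mul, smul_smul,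
            ← zpow_add_one₀ hμ0]
      | pred k ih =>
          have h2 : ((-(k : ℤ) - 1 : ℤ) : ℂ) * c = ((-(k:ℤ) : ℤ) : ℂ) * c + (-c) := by
            push_cast; ring
          rw [h2, hmul, ih, hneg, smul_mul_assoc, mul_smul_comm, one_mul, smul_smul,
            ← zpow_sub_one₀ hμ0]
    have h1 : (-(Complex.I * ((2 * (n : ℂ) + 1) * (η : ℂ))))
        = ((n : ℂ) * c) + (-(Complex.I * η)) := by rw [hc]; ring
    rw [h1, hmul, hzpow, ← Matrix.mulVec_mulVec, hpst, Matrix.mulVec_smul]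
    simp only [Matrix.smul_mulVec, Matrix.one_mulVec, dotProduct_smul, smul_eq_mul,
      norm_mul, hγ, norm_zpow, hμ, _root_.one_zpow, one_mul]
    simp [dotProduct_single]
end

section
/- Suppose A and B are real symmetric matrices such that: (i) there exist τ > 0 and a vertex u with |e_uᵀ exp(−imτ A) e_u| = 1 for all integers m; (ii) there exist η > 0 and distinct vertices v, w with exp(−iηB) e_w = γ e_v for some unit γ; and (iii) τ and η are linearly independent over ℚ. Then for every ε > 0 there exists t ∈ ℝ such that | |(e_u ⊗ e_v)ᵀ exp(−it(A ⊗ I + I ⊗ B)) (e_u ⊗ e_w)| − 1 | < ε. -/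
open Matrix Kronecker

namespace PSTAux

open NormedSpace

variable {n : Type*} [Fintype n] [DecidableEq n]

/-- Time evolution matrix `exp(-itC)`. -/
noncomputable def E (C : Matrix n n ℂ) (t : ℝ) : Matrix n n ℂ :=
  exp ((-(Complex.I * (t : ℂ))) • C)

lemma E_zero (C : Matrix n n ℂ) : E C 0 = 1 := by simp [E, exp_zero]

lemma E_add (C : Matrix n n ℂ) (s t : ℝ) : E C (s + t) = E C s * E C t := by
  have h : (-(Complex.I * ((s + t : ℝ) : ℂ))) • C
      = (-(Complex.I * (s:ℂ))) • C + (-(Complex.I * (t:ℂ))) • C := by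
    rw [← add_smul]; congr 1; push_cast; ring
  rw [E, h, Matrix.exp_add_of_commute _ _ (((Commute.refl C).smul_left _).smul_right _)]
  rfl

lemma E_continuous (C : Matrix n n ℂ) : Continuous (E C) := by
  letI : SeminormedRing (Matrix n n ℂ) := Matrix.linftyOpSemiNormedRing
  letI : NormedRing (Matrix n n ℂ) := Matrix.linftyOpNormedRing
  letI : NormedAlgebra ℂ (Matrix n n ℂ) := Matrix.linftyOpNormedAlgebra
  letI : NormedAlgebra ℚ (Matrix n n ℂ) := Matrix.linftyOpNormedAlgebra
  exact exp_continuous.comp (by continuity)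

lemma E_conjTranspose {C : Matrix n n ℂ} (hC : C.IsHermitian) (t : ℝ) :
    (E C t)ᴴ = E C (-t) := by
  rw [E, ← Matrix.exp_conjTranspose]
  congr 1
  rw [Matrix.conjTranspose_smul, hC.eq]
  congr 1
  simp [Complex.ext_iff]

lemma E_unitary {C : Matrix n n ℂ} (hC : C.IsHermitian) (t : ℝ) :
    (E C t)ᴴ * E C t = 1 := by
  rw [E_conjTranspose hC, ← E_add, neg_add_cancel, E_zero]

lemma E_entry_sq_sum {C : Matrix n n ℂ} (hC : C.IsHermitian) (t : ℝ) (j : n) :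
    ∑ k, Complex.normSq (E C t k j) = 1 := by
  have h := congrArg (fun P : Matrix n n ℂ => P j j) (E_unitary hC t)
  simp only [Matrix.mul_apply, Matrix.conjTranspose_apply, Matrix.one_apply_eq] at h
  have : (∑ k, (Complex.normSq (E C t k j) : ℂ)) = 1 := by
    rw [← h]; congr 1; ext k; rw [Complex.normSq_eq_conj_mul_self]; rfl
  exact_mod_cast this

lemma E_entry_abs_le {C : Matrix n n ℂ} (hC : C.IsHermitian) (t : ℝ) (i j : n) :
    ‖(E C t i j)‖ ≤ 1 := by
  have h := E_entry_sq_sum hC t j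
  have h1 : Complex.normSq (E C t i j) ≤ 1 := by
    rw [← h]
    exact Finset.single_le_sum (f := fun k => Complex.normSq (E C t k j))
      (fun k _ => Complex.normSq_nonneg _) (Finset.mem_univ i)
  have := Real.sqrt_le_sqrt h1
  rwa [Real.sqrt_one, ← Complex.norm_def] at this

lemma E_symm {C : Matrix n n ℂ} (hCs : C.IsSymm) (t : ℝ) : (E C t).IsSymm := by
  apply Matrix.IsSymm.exp
  rw [Matrix.IsSymm, Matrix.transpose_smul, hCs.eq]

lemma E_neg_mulVec {C : Matrix n n ℂ} (hC : C.IsHermitian) (hCs : C.IsSymm)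
    (s : ℝ) (c : ℂ) (x y : n)
    (h : E C s *ᵥ (Pi.single y 1 : n → ℂ) = c • (Pi.single x 1 : n → ℂ)) :
    E C (-s) *ᵥ (Pi.single y 1 : n → ℂ) = (starRingEnd ℂ) c • (Pi.single x 1 : n → ℂ) := by
  have hmap : E C (-s) = (E C s).map (starRingEnd ℂ) := by
    rw [← E_conjTranspose hC, Matrix.conjTranspose, (E_symm hCs s).eq]
    rfl
  have hcol : ∀ i, E C s i y = c * (Pi.single x 1 : n → ℂ) i := by
    intro i
    have := congrFun h i
    simpa [Matrix.mulVec_single] using this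
  ext i
  have h2 : E C (-s) i y = (starRingEnd ℂ) (E C s i y) := by rw [hmap]; rfl
  simp only [Matrix.mulVec_single, mul_one, h2, hcol i]
  rcases eq_or_ne i x with rfl | hix
  · simp [h2, hcol]
  · simp [Pi.single_apply, hix, h2, hcol]

lemma E_col {C : Matrix n n ℂ} (hC : C.IsHermitian) (hCs : C.IsSymm)
    {η : ℝ} {γ : ℂ} {v w : n} (hvw : v ≠ w) (hγ : ‖γ‖ = 1)
    (hpst : E C η *ᵥ (Pi.single w 1 : n → ℂ) = γ • (Pi.single v 1 : n → ℂ)) :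
    ∀ k : ℤ, ∃ c : ℂ, ‖c‖ = 1 ∧
      E C ((2 * (k : ℝ) + 1) * η) *ᵥ (Pi.single w 1 : n → ℂ) = c • (Pi.single v 1 : n → ℂ) := by
  have hcolw : ∀ i, E C η i w = γ * (Pi.single v 1 : n → ℂ) i := by
    intro i
    have := congrFun hpst i
    simpa [Matrix.mulVec_single] using this
  have hwv : E C η w v = γ := by
    have := congrFun (congrFun (E_symm hCs η).eq w) v
    rw [Matrix.transpose_apply] at this
    rw [← this]
    simpa using hcolw v
  have hxv : ∀ x, x ≠ w → E C η x v = 0 := by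
    intro x hx
    have hsum := E_entry_sq_sum hC η v
    have hw1 : Complex.normSq (E C η w v) = 1 := by
      rw [hwv, ← Complex.sq_norm, hγ]; norm_num
    have hrest : ∑ k ∈ Finset.univ.erase w, Complex.normSq (E C η k v) = 0 := by
      have := Finset.add_sum_erase Finset.univ (fun k => Complex.normSq (E C η k v))
        (Finset.mem_univ w)
      rw [← this, hw1] at hsum
      linarith
    have := (Finset.sum_eq_zero_iff_of_nonneg
      (fun k _ => Complex.normSq_nonneg (E C η k v))).mp hrest x
      (Finset.mem_erase.mpr ⟨hx, Finset.mem_univ x⟩)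
    exact Complex.normSq_eq_zero.mp this
  have hpst' : E C η *ᵥ (Pi.single v 1 : n → ℂ) = γ • (Pi.single w 1 : n → ℂ) := by
    ext i
    simp only [Matrix.mulVec_single, mul_one]
    rcases eq_or_ne i w with rfl | hiw
    · simp [hwv]
    · simp [Pi.single_apply, hiw, hxv i hiw]
  have hnat : ∀ k : ℕ, E C ((2 * (k : ℝ) + 1) * η) *ᵥ (Pi.single w 1 : n → ℂ)
      = (γ ^ (2 * k + 1)) • (Pi.single v 1 : n → ℂ) := by
    intro k
    induction k with
    | zero => simpa using hpst
    | succ k ih =>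
      have hsplit : (2 * ((k : ℝ) + 1) + 1) * η = η + (η + (2 * (k : ℝ) + 1) * η) := by ring
      push_cast
      rw [hsplit, E_add, E_add, ← Matrix.mulVec_mulVec, ← Matrix.mulVec_mulVec, ih,
        Matrix.mulVec_smul, hpst']
      simp only [Matrix.mulVec_smul, hpst, smul_smul]
      rw [show γ ^ (2 * k + 1) * γ * γ = γ ^ (2 * (k + 1) + 1) by ring]
  intro k
  rcases le_or_gt 0 k with hk | hk
  · obtain ⟨k', rfl⟩ := Int.eq_ofNat_of_zero_le hk
    refine ⟨γ ^ (2 * k' + 1), ?_, by exact_mod_cast hnat k'⟩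
    rw [norm_pow, hγ, one_pow]
  · set m : ℕ := (-k - 1).toNat with hm
    have hmk : (k : ℝ) = -((m : ℝ) + 1) := by
      have : (m : ℤ) = -k - 1 := Int.toNat_of_nonneg (by omega)
      have := congrArg (fun z : ℤ => (z : ℝ)) this
      push_cast at this
      linarith
    have hneg : (2 * (k : ℝ) + 1) * η = -((2 * (m : ℝ) + 1) * η) := by
      rw [hmk]; ring
    refine ⟨(starRingEnd ℂ) (γ ^ (2 * m + 1)), ?_, ?_⟩
    · rw [Complex.norm_conj, norm_pow, hγ, one_pow]
    · rw [hneg]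
      exact E_neg_mulVec hC hCs _ _ _ _ (hnat m)

/-- `X ↦ X ⊗ₖ 1` as an algebra hom. -/
noncomputable def kronL (m n : Type*) [Fintype m] [DecidableEq m] [Fintype n] [DecidableEq n] :
    Matrix m m ℂ →ₐ[ℂ] Matrix (m × n) (m × n) ℂ where
  toFun X := X ⊗ₖ (1 : Matrix n n ℂ)
  map_one' := Matrix.one_kronecker_one
  map_mul' X Y := by rw [← Matrix.mul_kronecker_mul, one_mul]
  map_zero' := Matrix.zero_kronecker _
  map_add' X Y := Matrix.add_kronecker _ _ _
  commutes' c := by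
    simp only [Algebra.algebraMap_eq_smul_one, Matrix.smul_kronecker,
      Matrix.one_kronecker_one]

/-- `Y ↦ 1 ⊗ₖ Y` as an algebra hom. -/
noncomputable def kronR (m n : Type*) [Fintype m] [DecidableEq m] [Fintype n] [DecidableEq n] :
    Matrix n n ℂ →ₐ[ℂ] Matrix (m × n) (m × n) ℂ where
  toFun Y := (1 : Matrix m m ℂ) ⊗ₖ Y
  map_one' := Matrix.one_kronecker_one
  map_mul' X Y := by rw [← Matrix.mul_kronecker_mul, one_mul]
  map_zero' := Matrix.kronecker_zero _
  map_add' X Y := Matrix.kronecker_add _ _ _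
  commutes' c := by
    simp only [Algebra.algebraMap_eq_smul_one, Matrix.kronecker_smul,
      Matrix.one_kronecker_one]

lemma exp_kron {m n : Type*} [Fintype m] [DecidableEq m] [Fintype n] [DecidableEq n]
    (X : Matrix m m ℂ) (Y : Matrix n n ℂ) :
    exp (X ⊗ₖ (1 : Matrix n n ℂ) + (1 : Matrix m m ℂ) ⊗ₖ Y)
      = exp X ⊗ₖ exp Y := by
  letI : SeminormedRing (Matrix m m ℂ) := Matrix.linftyOpSemiNormedRing
  letI : NormedRing (Matrix m m ℂ) := Matrix.linftyOpNormedRing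
  letI : NormedAlgebra ℂ (Matrix m m ℂ) := Matrix.linftyOpNormedAlgebra
  letI : NormedAlgebra ℚ (Matrix m m ℂ) := Matrix.linftyOpNormedAlgebra
  letI : SeminormedRing (Matrix n n ℂ) := Matrix.linftyOpSemiNormedRing
  letI : NormedRing (Matrix n n ℂ) := Matrix.linftyOpNormedRing
  letI : NormedAlgebra ℂ (Matrix n n ℂ) := Matrix.linftyOpNormedAlgebra
  letI : NormedAlgebra ℚ (Matrix n n ℂ) := Matrix.linftyOpNormedAlgebra
  letI : SeminormedRing (Matrix (m × n) (m × n) ℂ) := Matrix.linftyOpSemiNormedRing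
  letI : NormedRing (Matrix (m × n) (m × n) ℂ) := Matrix.linftyOpNormedRing
  letI : NormedAlgebra ℂ (Matrix (m × n) (m × n) ℂ) := Matrix.linftyOpNormedAlgebra
  letI : NormedAlgebra ℚ (Matrix (m × n) (m × n) ℂ) := Matrix.linftyOpNormedAlgebra
  have hcomm : Commute (X ⊗ₖ (1 : Matrix n n ℂ)) ((1 : Matrix m m ℂ) ⊗ₖ Y) := by
    unfold Commute SemiconjBy
    rw [← Matrix.mul_kronecker_mul, ← Matrix.mul_kronecker_mul, one_mul, mul_one,
      one_mul, mul_one]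
  have hL : Continuous (kronL m n : Matrix m m ℂ → Matrix (m × n) (m × n) ℂ) :=
    (kronL m n).toLinearMap.continuous_of_finiteDimensional
  have hR : Continuous (kronR m n : Matrix n n ℂ → Matrix (m × n) (m × n) ℂ) :=
    (kronR m n).toLinearMap.continuous_of_finiteDimensional
  rw [Matrix.exp_add_of_commute _ _ hcomm]
  have h1 : exp (X ⊗ₖ (1 : Matrix n n ℂ)) = exp X ⊗ₖ (1 : Matrix n n ℂ) :=
    (map_exp (kronL m n) hL X).symm
  have h2 : exp ((1 : Matrix m m ℂ) ⊗ₖ Y) = (1 : Matrix m m ℂ) ⊗ₖ exp Y :=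
    (map_exp (kronR m n) hR Y).symm
  rw [h1, h2, ← Matrix.mul_kronecker_mul, one_mul, mul_one]

lemma dot_single (U : Matrix n n ℂ) (x y : n) :
    (Pi.single x 1 : n → ℂ) ⬝ᵥ (U *ᵥ (Pi.single y 1 : n → ℂ)) = U x y := by
  simp [Matrix.mulVec_single, single_dotProduct]

lemma E_near_one (C : Matrix n n ℂ) (j : n) {ε : ℝ} (hε : 0 < ε) :
    ∃ δ > 0, ∀ s : ℝ, |s| < δ → ∑ k, ‖((E C s - 1) k j)‖ < ε := by
  set f : ℝ → ℝ := fun s => ∑ k, ‖((E C s - 1) k j)‖ with hf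
  have hcont : Continuous f := by
    apply continuous_finset_sum
    intro k _
    exact continuous_norm.comp
      (((continuous_apply j).comp ((continuous_apply k).comp (E_continuous C))).sub
        continuous_const)
  have h0 : f 0 = 0 := by simp [hf, E_zero]
  obtain ⟨δ, hδ, h⟩ := Metric.continuousAt_iff.mp (hcont.continuousAt (x := 0)) ε hε
  refine ⟨δ, hδ, fun s hs => ?_⟩
  have := h (x := s) (by simpa [Real.dist_eq] using hs)
  rw [Real.dist_eq, h0, sub_zero] at this
  calc f s ≤ |f s| := le_abs_self _
  _ < ε := this

lemma dense_odd (τ η : ℝ) (hτ : 0 < τ)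
    (hind : LinearIndependent ℚ ![τ, η]) :
    ∀ δ > 0, ∃ k m : ℤ, |(2 * (k:ℝ) + 1) * η - (m:ℝ) * τ| < δ := by
  intro δ hδ
  set S : AddSubgroup ℝ := AddSubgroup.zmultiples (2*η) ⊔ AddSubgroup.zmultiples τ with hS
  have hdense : Dense (S : Set ℝ) := by
    rcases S.dense_or_cyclic with h | ⟨a, ha⟩
    · exact h
    · exfalso
      have h2η : (2*η) ∈ S := le_sup_left (α := AddSubgroup ℝ)
        (AddSubgroup.mem_zmultiples (2*η))
      have hτS : τ ∈ S := le_sup_right (α := AddSubgroup ℝ)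
        (AddSubgroup.mem_zmultiples τ)
      rw [ha, AddSubgroup.mem_closure_singleton] at h2η hτS
      obtain ⟨p, hp⟩ := h2η
      obtain ⟨q, hq⟩ := hτS
      have hq0 : q ≠ 0 := by
        rintro rfl
        simp at hq
        exact hτ.ne' hq.symm
      have hrel : (q : ℝ) * (2 * η) = (p : ℝ) * τ := by
        rw [← hp, ← hq]
        push_cast [zsmul_eq_mul]
        ring
      have := (LinearIndependent.pair_iff.mp hind) (-p) (2*q) ?_
      · have h2q : (2 * q : ℚ) = 0 := this.2
        simp at h2q
        exact hq0 h2q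
      · rw [Rat.smul_def, Rat.smul_def]
        push_cast
        linarith
  have hmem : (-η) ∈ closure (S : Set ℝ) := hdense _
  rcases Metric.mem_closure_iff.mp hmem δ hδ with ⟨s, hsS, hdist⟩
  rcases AddSubgroup.mem_sup.mp hsS with ⟨y, hy, z, hz, rfl⟩
  rcases AddSubgroup.mem_zmultiples_iff.mp hy with ⟨j, rfl⟩
  rcases AddSubgroup.mem_zmultiples_iff.mp hz with ⟨m, rfl⟩
  refine ⟨j, -m, ?_⟩
  have : dist (-η) (j • (2*η) + m • τ) = |(2*(j:ℝ)+1)*η - ((-m : ℤ) : ℝ) * τ| := by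
    rw [Real.dist_eq, abs_sub_comm]
    push_cast [zsmul_eq_mul]
    congr 1
    ring
  rw [← this]
  exact hdist

lemma single_prod {m n : Type*} [DecidableEq m] [DecidableEq n] (u : m) (v : n) :
    (fun p : m × n => (Pi.single u 1 : m → ℂ) p.1 * (Pi.single v 1 : n → ℂ) p.2)
      = (Pi.single (u, v) 1 : m × n → ℂ) := by
  ext ⟨a, b⟩
  rcases eq_or_ne a u with rfl | ha <;> rcases eq_or_ne b v with rfl | hb <;>
    simp [Pi.single_apply, Prod.ext_iff, *]

end PSTAux

open PSTAux NormedSpace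

theorem stmt_10 (M N : ℕ)
    (A : Matrix (Fin M) (Fin M) ℝ) (hA : A.IsSymm)
    (B : Matrix (Fin N) (Fin N) ℝ) (hB : B.IsSymm)
    (τ : ℝ) (hτ : 0 < τ) (u : Fin M)
    (hper : ∀ m : ℤ,
      ‖((Pi.single u 1 : Fin M → ℂ) ⬝ᵥ
        (NormedSpace.exp ((-(Complex.I * (m * τ))) • A.map (fun x => (x : ℂ))) *ᵥ
          (Pi.single u 1 : Fin M → ℂ)))‖ = 1)
    (η : ℝ) (hη : 0 < η) (v w : Fin N) (hvw : v ≠ w)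
    (γ : ℂ) (hγ : ‖γ‖ = 1)
    (hpst : NormedSpace.exp ((-(Complex.I * η)) • B.map (fun x => (x : ℂ))) *ᵥ
        (Pi.single w 1 : Fin N → ℂ) = γ • (Pi.single v 1 : Fin N → ℂ))
    (hind : LinearIndependent ℚ ![τ, η]) :
    ∀ ε > 0, ∃ t : ℝ,
      |‖((fun p : Fin M × Fin N => (Pi.single u 1 : Fin M → ℂ) p.1 *
            (Pi.single v 1 : Fin N → ℂ) p.2) ⬝ᵥ
        (NormedSpace.exp ((-(Complex.I * t)) •
            ((A.map (fun x => (x : ℂ))) ⊗ₖ (1 : Matrix (Fin N) (Fin N) ℂ) +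
             (1 : Matrix (Fin M) (Fin M) ℂ) ⊗ₖ (B.map (fun x => (x : ℂ))))) *ᵥ
          (fun p : Fin M × Fin N => (Pi.single u 1 : Fin M → ℂ) p.1 *
            (Pi.single w 1 : Fin N → ℂ) p.2)))‖ - 1| < ε := by
  intro ε hε
  set A' : Matrix (Fin M) (Fin M) ℂ := A.map (fun x => (x : ℂ)) with hA'
  set B' : Matrix (Fin N) (Fin N) ℂ := B.map (fun x => (x : ℂ)) with hB'
  have hA's : A'.IsSymm := by
    rw [Matrix.IsSymm, ← Matrix.transpose_map, hA.eq]
  have hB's : B'.IsSymm := by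
    rw [Matrix.IsSymm, ← Matrix.transpose_map, hB.eq]
  have hA'h : A'.IsHermitian := by
    ext i j
    have hsym := congrFun (congrFun hA.eq i) j
    rw [Matrix.transpose_apply] at hsym
    simp [Matrix.conjTranspose_apply, hA', Matrix.map_apply, Complex.conj_ofReal, hsym]
  have hB'h : B'.IsHermitian := by
    ext i j
    have hsym := congrFun (congrFun hB.eq i) j
    rw [Matrix.transpose_apply] at hsym
    simp [Matrix.conjTranspose_apply, hB', Matrix.map_apply, Complex.conj_ofReal, hsym]
  -- translate hypotheses
  have hpstE : E B' η *ᵥ (Pi.single w 1 : Fin N → ℂ) = γ • (Pi.single v 1 : Fin N → ℂ) := hpst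
  have hcol := E_col hB'h hB's hvw hγ hpstE
  have hperE : ∀ m : ℤ, ‖((E A' ((m : ℝ) * τ)) u u)‖ = 1 := by
    intro m
    have h := hper m
    rw [show (-(Complex.I * ((m : ℂ) * (τ : ℂ)))) = -(Complex.I * (((m : ℝ) * τ : ℝ) : ℂ)) by
      push_cast; ring] at h
    rw [dot_single] at h
    exact h
  -- choose δ ensuring closeness
  obtain ⟨δ, hδ, hnear⟩ := E_near_one A' u hε
  obtain ⟨k, m, hkm⟩ := dense_odd τ η hτ hind δ hδ
  set t : ℝ := (2 * (k : ℝ) + 1) * η with ht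
  obtain ⟨c, hc1, hcw⟩ := hcol k
  refine ⟨t, ?_⟩
  -- factor the exponential
  have hexp : NormedSpace.exp ((-(Complex.I * (t : ℂ))) •
      (A' ⊗ₖ (1 : Matrix (Fin N) (Fin N) ℂ) + (1 : Matrix (Fin M) (Fin M) ℂ) ⊗ₖ B'))
      = E A' t ⊗ₖ E B' t := by
    rw [smul_add, ← Matrix.smul_kronecker, ← Matrix.kronecker_smul]
    exact exp_kron _ _
  rw [single_prod u v, single_prod u w, hexp, dot_single, Matrix.kroneckerMap_apply]
  -- evaluate the B factor
  have hBvw : E B' t v w = c := by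
    have := congrFun hcw v
    simpa [Matrix.mulVec_single] using this
  rw [hBvw]
  -- the A factor is close to a modulus-one number
  set s : ℝ := t - (m : ℝ) * τ with hs
  have hsδ : |s| < δ := hkm
  have hsplit : E A' t = E A' ((m : ℝ) * τ) * E A' s := by
    rw [← E_add]; congr 1; rw [hs]; ring
  have hdiff : ‖(E A' t u u - E A' ((m : ℝ) * τ) u u)‖ < ε := by
    have h1 : E A' t u u = ∑ x, E A' ((m : ℝ) * τ) u x * E A' s x u := by
      rw [hsplit, Matrix.mul_apply]
    have h2 : E A' ((m : ℝ) * τ) u u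
        = ∑ x, E A' ((m : ℝ) * τ) u x * (1 : Matrix (Fin M) (Fin M) ℂ) x u := by
      rw [← Matrix.mul_apply, mul_one]
    rw [h1, h2, ← Finset.sum_sub_distrib]
    have h3 : ∀ x, E A' ((m : ℝ) * τ) u x * E A' s x u
        - E A' ((m : ℝ) * τ) u x * (1 : Matrix (Fin M) (Fin M) ℂ) x u
        = E A' ((m : ℝ) * τ) u x * ((E A' s - 1) x u) := by
      intro x
      rw [Matrix.sub_apply, mul_sub]
    simp only [h3]
    calc ‖(∑ x, E A' ((m : ℝ) * τ) u x * ((E A' s - 1) x u))‖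
        ≤ ∑ x, ‖(E A' ((m : ℝ) * τ) u x * ((E A' s - 1) x u))‖ := by
          exact norm_sum_le _ _
      _ ≤ ∑ x, ‖((E A' s - 1) x u)‖ := by
          apply Finset.sum_le_sum
          intro x _
          rw [norm_mul]
          calc ‖(E A' ((m : ℝ) * τ) u x)‖ * ‖((E A' s - 1) x u)‖
              ≤ 1 * ‖((E A' s - 1) x u)‖ := by
                apply mul_le_mul_of_nonneg_right (E_entry_abs_le hA'h _ _ _)
                  (norm_nonneg _)
            _ = ‖((E A' s - 1) x u)‖ := one_mul _
      _ < ε := hnear s hsδ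
  -- conclude
  have hG : ‖(E A' ((m : ℝ) * τ) u u * c)‖ = 1 := by
    rw [norm_mul, hperE m, hc1, mul_one]
  calc |‖(E A' t u u * c)‖ - 1|
      = |‖(E A' t u u * c)‖ - ‖(E A' ((m : ℝ) * τ) u u * c)‖| := by
        rw [hG]
    _ ≤ ‖(E A' t u u * c - E A' ((m : ℝ) * τ) u u * c)‖ :=
        abs_norm_sub_norm_le _ _
    _ = ‖((E A' t u u - E A' ((m : ℝ) * τ) u u) * c)‖ := by rw [sub_mul]
    _ = ‖(E A' t u u - E A' ((m : ℝ) * τ) u u)‖ * 1 := by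
        rw [norm_mul, hc1]
    _ < ε := by rwa [mul_one]
end

section
/- Let A be the adjacency matrix of P₃ and H(t) = exp(−itA). Then H(π/√2) e₁ = −e₃ and H(π/√2) e₃ = −e₁, i.e., P₃ admits perfect state transfer between its two end vertices at time π/√2; moreover H(2π/√2) = I, i.e., P₃ is periodic with period 2π/√2. -/
open Matrix

noncomputable section

private def sc : ℂ := ((Real.sqrt 2 : ℝ) : ℂ)

private lemma hs2 : sc ^ 2 = 2 := by
  rw [sc, sq, ← Complex.ofReal_mul, Real.mul_self_sqrt (by norm_num : (0:ℝ) ≤ 2)]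
  norm_num

private def Um : Matrix (Fin 3) (Fin 3) ℂ := !![1,1,1; sc,0,-sc; 1,-1,1]
private def Vm : Matrix (Fin 3) (Fin 3) ℂ := (4:ℂ)⁻¹ • !![1,sc,1; 2,0,-2; 1,-sc,1]

private lemma diag_eq (a b c : ℂ) :
    Matrix.diagonal ![a,b,c] = !![a,0,0;0,b,0;0,0,c] := by
  ext i j
  fin_cases i <;> fin_cases j <;>
    simp [Matrix.diagonal, Matrix.vecHead, Matrix.vecTail]

private lemma hUV : Um * Vm = 1 := by
  have hp := hs2
  ext i j
  fin_cases i <;> fin_cases j <;>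
    simp [Um, Vm, Matrix.mul_apply, Fin.sum_univ_succ, Matrix.vecHead, Matrix.vecTail]
  all_goals first
    | ring1
    | (ring_nf; rw [hp]; first | ring1 | norm_num)

private lemma hVU : Vm * Um = 1 := by
  have hp := hs2
  ext i j
  fin_cases i <;> fin_cases j <;>
    simp [Um, Vm, Matrix.mul_apply, Fin.sum_univ_succ, Matrix.vecHead, Matrix.vecTail]
  all_goals first
    | ring1
    | (ring_nf; rw [hp]; first | ring1 | norm_num)

private lemma key (c : ℂ) :
    NormedSpace.exp (c • (!![0,1,0;1,0,1;0,1,0] : Matrix (Fin 3) (Fin 3) ℂ)) =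
      Um * !![Complex.exp (c * sc),0,0; 0,1,0; 0,0,Complex.exp (-(c * sc))] * Vm := by
  have hU : IsUnit Um := by
    have := invertibleOfRightInverse Um Vm hUV
    exact isUnit_of_invertible Um
  have hUinv : Um⁻¹ = Vm := Matrix.inv_eq_right_inv hUV
  have hp := hs2
  have hA : c • (!![0,1,0;1,0,1;0,1,0] : Matrix (Fin 3) (Fin 3) ℂ) =
      Um * Matrix.diagonal ![c * sc, 0, -(c * sc)] * Um⁻¹ := by
    rw [hUinv, diag_eq]
    ext i j
    fin_cases i <;> fin_cases j <;>
      simp [Um, Vm, Matrix.mul_apply, Fin.sum_univ_succ, Matrix.vecHead, Matrix.vecTail]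
    all_goals first
      | ring1
      | (ring_nf; rw [hp]; first | ring1 | norm_num)
  rw [hA, Matrix.exp_conj Um (Matrix.diagonal ![c * sc, 0, -(c * sc)]) hU,
    Matrix.exp_diagonal, hUinv]
  have hv : NormedSpace.exp (![c * sc, 0, -(c * sc)]) =
      ![Complex.exp (c * sc), 1, Complex.exp (-(c * sc))] := by
    rw [Pi.exp_def]
    funext i
    fin_cases i <;>
      simp [← Complex.exp_eq_exp_ℂ, Complex.exp_zero, Matrix.vecHead, Matrix.vecTail]
  rw [hv, diag_eq]

theorem stmt_11 :
    let A : Matrix (Fin 3) (Fin 3) ℂ := !![0,1,0;1,0,1;0,1,0]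
    (NormedSpace.exp ((-(Complex.I * (Real.pi / Real.sqrt 2 : ℝ))) • A) *ᵥ
        (Pi.single 0 1 : Fin 3 → ℂ) = -(Pi.single 2 1 : Fin 3 → ℂ)) ∧
    (NormedSpace.exp ((-(Complex.I * (Real.pi / Real.sqrt 2 : ℝ))) • A) *ᵥ
        (Pi.single 2 1 : Fin 3 → ℂ) = -(Pi.single 0 1 : Fin 3 → ℂ)) ∧
    NormedSpace.exp ((-(Complex.I * (2 * Real.pi / Real.sqrt 2 : ℝ))) • A) = 1 := by
  intro A
  have hp := hs2
  have hsne : sc ≠ 0 := by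
    intro h; rw [h] at hp; norm_num at hp
  have h1 : (-(Complex.I * (Real.pi / Real.sqrt 2 : ℝ))) * sc = -(Real.pi * Complex.I) := by
    simp only [Complex.ofReal_div]
    rw [show ((Real.sqrt 2 : ℝ) : ℂ) = sc from rfl]
    field_simp
    try tauto
  have h1' : Complex.exp ((-(Complex.I * (Real.pi / Real.sqrt 2 : ℝ))) * sc) = -1 := by
    rw [h1, Complex.exp_neg, Complex.exp_pi_mul_I]
    norm_num
  have h1'' : Complex.exp (-((-(Complex.I * (Real.pi / Real.sqrt 2 : ℝ))) * sc)) = -1 := by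
    rw [h1, neg_neg, Complex.exp_pi_mul_I]
  have hM1 : NormedSpace.exp ((-(Complex.I * (Real.pi / Real.sqrt 2 : ℝ))) • A) =
      !![0,0,-1;0,-1,0;-1,0,0] := by
    rw [show A = !![0,1,0;1,0,1;0,1,0] from rfl, key, h1', h1'']
    ext i j
    fin_cases i <;> fin_cases j <;>
      simp [Um, Vm, Matrix.mul_apply, Fin.sum_univ_succ, Matrix.vecHead, Matrix.vecTail]
    all_goals first
      | ring1
      | (ring_nf; rw [hp]; first | ring1 | norm_num)
  have hcs : (-(Complex.I * (2 * Real.pi / Real.sqrt 2 : ℝ))) * sc =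
      -(2 * Real.pi * Complex.I) := by
    simp only [Complex.ofReal_div, Complex.ofReal_mul, Complex.ofReal_ofNat]
    rw [show ((Real.sqrt 2 : ℝ) : ℂ) = sc from rfl]
    field_simp
    try tauto
  have hM2 : NormedSpace.exp ((-(Complex.I * (2 * Real.pi / Real.sqrt 2 : ℝ))) • A) = 1 := by
    rw [show A = !![0,1,0;1,0,1;0,1,0] from rfl, key, hcs]
    have he : Complex.exp (-(2 * Real.pi * Complex.I)) = 1 := by
      rw [Complex.exp_neg, Complex.exp_two_pi_mul_I]; norm_num
    rw [he, neg_neg, Complex.exp_two_pi_mul_I]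
    have h1m : (!![(1:ℂ),0,0;0,1,0;0,0,1] : Matrix (Fin 3) (Fin 3) ℂ) = 1 := by
      ext i j
      fin_cases i <;> fin_cases j <;> simp [Matrix.vecHead, Matrix.vecTail]
    rw [h1m, mul_one, hUV]
  refine ⟨?_, ?_, hM2⟩ <;> rw [hM1] <;>
    · funext i
      fin_cases i <;>
        simp [Matrix.mulVec, dotProduct, Fin.sum_univ_succ, Pi.single_apply,
          Matrix.vecHead, Matrix.vecTail]
end
end

section
/- Let A be a real symmetric n×n matrix and suppose exp(−iτA) e_u = γ e_u for some nonzero real τ, unit complex γ, and standard basis vector e_u. If λ_k, λ_l, λ_r, λ_s are eigenvalues of A in the eigenvalue support of e_u (i.e., E_k e_u ≠ 0, etc., where E_j is the orthogonal projection onto the λ_j-eigenspace), and λ_r ≠ λ_s, then (λ_k − λ_l)/(λ_r − λ_s) is rational. -/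
open Matrix

lemma exp_mulVec_eigen {n : ℕ} (B : Matrix (Fin n) (Fin n) ℂ) (v : Fin n → ℂ) (c : ℂ)
    (h : B *ᵥ v = c • v) : NormedSpace.exp B *ᵥ v = Complex.exp c • v := by
  letI : NormedRing (Matrix (Fin n) (Fin n) ℂ) := Matrix.linftyOpNormedRing
  letI : NormedAlgebra ℂ (Matrix (Fin n) (Fin n) ℂ) := Matrix.linftyOpNormedAlgebra
  have hpow : ∀ m : ℕ, B ^ m *ᵥ v = c ^ m • v := by
    intro m
    induction m with
    | zero => simp
    | succ m ih =>
      rw [pow_succ, ← mulVec_mulVec, h, mulVec_smul, ih, smul_smul, pow_succ, mul_comm]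
  -- the linear map M ↦ M *ᵥ v
  let f : Matrix (Fin n) (Fin n) ℂ →ₗ[ℂ] (Fin n → ℂ) :=
    { toFun := fun M => M *ᵥ v
      map_add' := fun M N => add_mulVec M N v
      map_smul' := fun a M => smul_mulVec a M v }
  let g : Matrix (Fin n) (Fin n) ℂ →L[ℂ] (Fin n → ℂ) := LinearMap.toContinuousLinearMap f
  have hg : ∀ M, g M = M *ᵥ v := fun M => rfl
  have hs : Summable fun m : ℕ => ((m.factorial : ℂ))⁻¹ • B ^ m :=
    NormedSpace.expSeries_summable' (𝕂 := ℂ) B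
  have hsc : Summable fun m : ℕ => ((m.factorial : ℂ))⁻¹ • c ^ m :=
    NormedSpace.expSeries_summable' (𝕂 := ℂ) c
  have h1 : NormedSpace.exp B *ᵥ v = g (∑' m : ℕ, ((m.factorial : ℂ))⁻¹ • B ^ m) := by
    rw [hg, NormedSpace.exp_eq_tsum (𝕂 := ℂ)]
  rw [h1, g.map_tsum hs]
  have h2 : ∀ m : ℕ, g (((m.factorial : ℂ))⁻¹ • B ^ m) = (((m.factorial : ℂ))⁻¹ • c ^ m) • v := by
    intro m
    rw [hg, smul_mulVec, hpow, smul_smul, smul_eq_mul]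
  simp_rw [h2]
  rw [hsc.tsum_smul_const]
  congr 1
  rw [Complex.exp_eq_exp_ℂ, NormedSpace.exp_eq_tsum (𝕂 := ℂ)]

lemma exp_eq_gamma {n : ℕ} (A : Matrix (Fin n) (Fin n) ℝ) (hA : A.IsSymm)
    (u : Fin n) (τ : ℝ) (γ : ℂ)
    (hper : NormedSpace.exp ((-(Complex.I * τ)) • A.map (fun x => (x : ℂ))) *ᵥ
        (Pi.single u 1 : Fin n → ℂ) = γ • (Pi.single u 1 : Fin n → ℂ))
    (l : ℝ) (E : Matrix (Fin n) (Fin n) ℝ)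
    (hE : E.IsSymm ∧ E * E = E ∧ A * E = l • E ∧ E *ᵥ Pi.single u 1 ≠ 0) :
    Complex.exp (-(Complex.I * τ * l)) = γ := by
  obtain ⟨hEsymm, -, hAE, hEu⟩ := hE
  letI : NormedRing (Matrix (Fin n) (Fin n) ℂ) := Matrix.linftyOpNormedRing
  letI : NormedAlgebra ℂ (Matrix (Fin n) (Fin n) ℂ) := Matrix.linftyOpNormedAlgebra
  have hEA : E * A = l • E := by
    have : (A * E)ᵀ = E * A := by rw [Matrix.transpose_mul, hA, hEsymm]
    rw [← this, hAE, Matrix.transpose_smul, hEsymm]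
  set f : ℝ →+* ℂ := Complex.ofRealHom
  have hmap : ∀ M : Matrix (Fin n) (Fin n) ℝ, M.map (fun x => (x : ℂ)) = M.map f := fun _ => rfl
  set A' : Matrix (Fin n) (Fin n) ℂ := A.map f with hA'
  set E' : Matrix (Fin n) (Fin n) ℂ := E.map f with hE'
  have hAE' : A' * E' = (l : ℂ) • E' := by
    rw [hA', hE', ← Matrix.map_mul, hAE]
    ext i j
    simp [f, Matrix.map_apply]
  have hEA' : E' * A' = (l : ℂ) • E' := by
    rw [hA', hE', ← Matrix.map_mul, hEA]
    ext i j
    simp [f, Matrix.map_apply]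
  set B : Matrix (Fin n) (Fin n) ℂ := (-(Complex.I * τ)) • A' with hB
  set v : Fin n → ℂ := E' *ᵥ (Pi.single u 1 : Fin n → ℂ) with hv
  have heig : B *ᵥ v = (-(Complex.I * τ * l)) • v := by
    rw [hB, hv, smul_mulVec, mulVec_mulVec, hAE', smul_mulVec, smul_smul]
    ring_nf
  have hcomm : Commute E' B := by
    rw [hB, Commute, SemiconjBy, Matrix.mul_smul, Matrix.smul_mul, hAE', hEA']
  have hcommExp : Commute E' (NormedSpace.exp B) := hcomm.exp_right
  -- apply E' to hper
  have key : NormedSpace.exp B *ᵥ v = γ • v := by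
    have h1 : E' *ᵥ (NormedSpace.exp B *ᵥ (Pi.single u 1 : Fin n → ℂ)) =
        γ • v := by
      rw [hmap] at hper
      rw [hper, mulVec_smul]
    rwa [mulVec_mulVec, hcommExp.eq, ← mulVec_mulVec] at h1
  rw [exp_mulVec_eigen B v _ heig] at key
  -- v ≠ 0
  have hvne : v ≠ 0 := by
    intro hc
    apply hEu
    obtain ⟨i, hi⟩ : ∃ i, (E *ᵥ Pi.single u 1) i ≠ 0 := by
      by_contra hall
      push_neg at hall
      exact hEu (funext hall)
    exfalso
    apply hi
    have : v i = 0 := by rw [hc]; rfl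
    rw [hv, mulVec_single] at this
    simp only [MulOpposite.op_one, one_smul] at this
    have : (E i u : ℂ) = 0 := this
    have h2 : E i u = 0 := by exact_mod_cast this
    simp [mulVec_single, h2]
  obtain ⟨i, hi⟩ : ∃ i, v i ≠ 0 := by
    by_contra hall
    push_neg at hall
    exact hvne (funext hall)
  have := congrFun key i
  simp only [Pi.smul_apply, smul_eq_mul] at this
  exact mul_right_cancel₀ hi this

theorem stmt_15 (n : ℕ) (A : Matrix (Fin n) (Fin n) ℝ) (hA : A.IsSymm)
    (u : Fin n) (τ : ℝ) (hτ : τ ≠ 0) (γ : ℂ) (hγ : ‖γ‖ = 1)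
    (hper : NormedSpace.exp ((-(Complex.I * τ)) • A.map (fun x => (x : ℂ))) *ᵥ
        (Pi.single u 1 : Fin n → ℂ) = γ • (Pi.single u 1 : Fin n → ℂ))
    (lk ll lr ls : ℝ) (Ek El Er Es : Matrix (Fin n) (Fin n) ℝ)
    (hEk : Ek.IsSymm ∧ Ek * Ek = Ek ∧ A * Ek = lk • Ek ∧ Ek *ᵥ Pi.single u 1 ≠ 0)
    (hEl : El.IsSymm ∧ El * El = El ∧ A * El = ll • El ∧ El *ᵥ Pi.single u 1 ≠ 0)
    (hEr : Er.IsSymm ∧ Er * Er = Er ∧ A * Er = lr • Er ∧ Er *ᵥ Pi.single u 1 ≠ 0)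
    (hEs : Es.IsSymm ∧ Es * Es = Es ∧ A * Es = ls • Es ∧ Es *ᵥ Pi.single u 1 ≠ 0)
    (hrs : lr ≠ ls) :
    ∃ q : ℚ, (lk - ll) / (lr - ls) = (q : ℝ) := by
  have hk := exp_eq_gamma A hA u τ γ hper lk Ek hEk
  have hl := exp_eq_gamma A hA u τ γ hper ll El hEl
  have hr := exp_eq_gamma A hA u τ γ hper lr Er hEr
  have hs := exp_eq_gamma A hA u τ γ hper ls Es hEs
  have hkl : Complex.exp (-(Complex.I * τ * lk)) = Complex.exp (-(Complex.I * τ * ll)) := by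
    rw [hk, hl]
  have hrs' : Complex.exp (-(Complex.I * τ * lr)) = Complex.exp (-(Complex.I * τ * ls)) := by
    rw [hr, hs]
  rw [Complex.exp_eq_exp_iff_exists_int] at hkl hrs'
  obtain ⟨m₁, hm₁⟩ := hkl
  obtain ⟨m₂, hm₂⟩ := hrs'
  have h1 : τ * (ll - lk) = 2 * Real.pi * m₁ := by
    have : ((τ * (ll - lk) : ℝ) : ℂ) = ((2 * Real.pi * m₁ : ℝ) : ℂ) := by
      push_cast
      linear_combination (-Complex.I) * hm₁ +
        ((τ : ℂ) * ll - (τ : ℂ) * lk - 2 * (Real.pi : ℂ) * m₁) * Complex.I_sq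
    exact_mod_cast this
  have h2 : τ * (ls - lr) = 2 * Real.pi * m₂ := by
    have : ((τ * (ls - lr) : ℝ) : ℂ) = ((2 * Real.pi * m₂ : ℝ) : ℂ) := by
      push_cast
      linear_combination (-Complex.I) * hm₂ +
        ((τ : ℂ) * ls - (τ : ℂ) * lr - 2 * (Real.pi : ℂ) * m₂) * Complex.I_sq
    exact_mod_cast this
  have hm₂ne : (m₂ : ℝ) ≠ 0 := by
    intro hc
    have : τ * (ls - lr) = 0 := by rw [h2, hc]; ring
    rcases mul_eq_zero.1 this with h | h
    · exact hτ h
    · exact hrs (by linarith)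
  refine ⟨(-m₁ : ℚ) / (-m₂ : ℚ), ?_⟩
  have hls : lr - ls ≠ 0 := sub_ne_zero.2 hrs
  have hkey : (lk - ll) * (-(m₂ : ℝ)) = (-(m₁ : ℝ)) * (lr - ls) := by
    have : τ * ((lk - ll) * (-(m₂ : ℝ))) = τ * ((-(m₁ : ℝ)) * (lr - ls)) := by
      have e1 : τ * (lk - ll) = 2 * Real.pi * (-m₁ : ℝ) := by push_cast; linarith [h1]
      have e2 : τ * (lr - ls) = 2 * Real.pi * (-m₂ : ℝ) := by push_cast; linarith [h2]
      linear_combination (-(m₂:ℝ)) * e1 + ((m₁:ℝ)) * e2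
    exact mul_left_cancel₀ hτ this
  push_cast
  rw [div_eq_div_iff hls (by simpa using hm₂ne)]
  linarith [hkey]
end

section
/- Let H₁(t) and H₂(t) be the matrix exponentials exp(−itA₁) and exp(−itA₂) of commuting real symmetric matrices A₁, A₂, and suppose H₁(qπ) = I for every integer q while there exist distinct indices u, v and τ > 0 with |e_uᵀ H₂((2p−1)τ) e_v| = 1 for all integers p. If τ/π is irrational, then for every ε > 0 there exists an integer q with | |e_uᵀ exp(−iqπ(A₁ + A₂)) e_v| − 1 | < ε. -/
open Matrix

section Aux

attribute [local instance] Matrix.linftyOpNormedRing Matrix.linftyOpNormedAlgebra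

/-- Entry extraction as a continuous linear map. -/
noncomputable def entryCLM (n : ℕ) (u v : Fin n) :
    Matrix (Fin n) (Fin n) ℂ →L[ℂ] ℂ where
  toFun X := X u v
  map_add' _ _ := rfl
  map_smul' _ _ := rfl
  cont := continuous_id.matrix_elem u v

lemma aux_lip (n : ℕ) (B : Matrix (Fin n) (Fin n) ℂ) (u v : Fin n) (C : ℝ)
    (hC : ∀ t : ℝ, ‖(NormedSpace.exp ((t : ℂ) • B) * B) u v‖ ≤ C) (s t : ℝ) :
    ‖(NormedSpace.exp ((s : ℂ) • B)) u v - (NormedSpace.exp ((t : ℂ) • B)) u v‖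
      ≤ C * |s - t| := by
  set L := entryCLM n u v
  have hderiv : ∀ x : ℝ, HasDerivAt (fun r : ℝ => (NormedSpace.exp ((r : ℂ) • B)) u v)
      ((NormedSpace.exp ((x : ℂ) • B) * B) u v) x := by
    intro x
    have hrw : ∀ r : ℝ, ((r : ℂ) • B) = r • B := fun r => algebraMap_smul ℂ r B
    have hee : (NormedSpace.exp : Matrix (Fin n) (Fin n) ℂ → Matrix (Fin n) (Fin n) ℂ)
        = NormedSpace.exp := rfl
    have h2 : HasDerivAt (fun r : ℝ => NormedSpace.exp ((r : ℂ) • B))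
        (NormedSpace.exp ((x : ℂ) • B) * B) x := by
      have h1 : HasDerivAt (fun r : ℝ => NormedSpace.exp (r • B))
          (NormedSpace.exp (x • B) * B) x := hasDerivAt_exp_smul_const B x
      simp only [hee, hrw] at h1 ⊢
      exact h1
    have h3 := ((L.restrictScalars ℝ).hasFDerivAt.comp_hasDerivAt x h2)
    exact h3
  have := Convex.norm_image_sub_le_of_norm_hasDerivWithin_le
    (f := fun r : ℝ => (NormedSpace.exp ((r : ℂ) • B)) u v)
    (f' := fun x : ℝ => (NormedSpace.exp ((x : ℂ) • B) * B) u v)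
    (s := Set.univ)
    (fun x _ => (hderiv x).hasDerivWithinAt) (fun x _ => hC x) convex_univ
    (Set.mem_univ t) (Set.mem_univ s)
  simpa [Real.norm_eq_abs] using this

end Aux

theorem stmt_17 (n : ℕ) (A₁ A₂ : Matrix (Fin n) (Fin n) ℝ)
    (hA₁ : A₁.IsSymm) (hA₂ : A₂.IsSymm) (hcomm : A₁ * A₂ = A₂ * A₁)
    (hper : ∀ q : ℤ,
      NormedSpace.exp ((-(Complex.I * (q * Real.pi))) • A₁.map (fun x => (x : ℂ))) = 1)
    (u v : Fin n) (huv : u ≠ v) (τ : ℝ) (hτ : 0 < τ)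
    (hpst : ∀ p : ℤ,
      ‖((Pi.single u 1 : Fin n → ℂ) ⬝ᵥ
        (NormedSpace.exp ((-(Complex.I * ((2 * p - 1) * τ))) • A₂.map (fun x => (x : ℂ))) *ᵥ
          (Pi.single v 1 : Fin n → ℂ)))‖ = 1)
    (hirr : Irrational (τ / Real.pi)) :
    ∀ ε > 0, ∃ q : ℤ,
      |‖((Pi.single u 1 : Fin n → ℂ) ⬝ᵥ
        (NormedSpace.exp ((-(Complex.I * (q * Real.pi))) •
            (A₁ + A₂).map (fun x => (x : ℂ))) *ᵥ
          (Pi.single v 1 : Fin n → ℂ)))‖ - 1| < ε := by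
  intro ε hε
  set M₁ : Matrix (Fin n) (Fin n) ℂ := A₁.map (fun x => (x : ℂ)) with hM₁
  set M₂ : Matrix (Fin n) (Fin n) ℂ := A₂.map (fun x => (x : ℂ)) with hM₂
  set B : Matrix (Fin n) (Fin n) ℂ := (-Complex.I) • M₂ with hB
  -- scalar rewriting
  have hsc : ∀ c : ℂ, (-(Complex.I * c)) • M₂ = c • B := by
    intro c
    rw [hB, smul_smul]
    congr 1
    ring
  -- entry of the matrix product with basis vectors
  have hdp : ∀ X : Matrix (Fin n) (Fin n) ℂ,
      ((Pi.single u 1 : Fin n → ℂ) ⬝ᵥ (X *ᵥ (Pi.single v 1 : Fin n → ℂ))) = X u v := by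
    intro X
    simp [Matrix.mulVec_single, single_dotProduct]
  -- M₂ is Hermitian
  have hM₂H : M₂ᴴ = M₂ := by
    ext i j
    simp only [conjTranspose_apply, Matrix.map_apply, hM₂]
    rw [Complex.star_def, Complex.conj_ofReal]
    exact congrArg _ (congrFun (congrFun hA₂ i) j)
  -- exp((t:ℂ) • B) is unitary
  have hunit : ∀ t : ℝ, NormedSpace.exp ((t : ℂ) • B) ∈ Matrix.unitaryGroup (Fin n) ℂ := by
    intro t
    have hH : ((t : ℂ) • B)ᴴ = -((t : ℂ) • B) := by
      rw [hB, smul_smul, conjTranspose_smul, hM₂H, ← neg_smul]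
      congr 1
      have : star ((t : ℂ) * -Complex.I) = ((t : ℂ)) * Complex.I := by
        rw [Complex.star_def, _root_.map_mul, Complex.conj_ofReal, map_neg, Complex.conj_I,
          neg_neg]
      rw [this]
      ring
    have hstar : star (NormedSpace.exp ((t : ℂ) • B))
        = NormedSpace.exp (-((t : ℂ) • B)) := by
      rw [Matrix.star_eq_conjTranspose, ← Matrix.exp_conjTranspose, hH]
    rw [Matrix.mem_unitaryGroup_iff, hstar, ← Matrix.exp_add_of_commute _ _
      ((Commute.refl ((t : ℂ) • B)).neg_right), add_neg_cancel, NormedSpace.exp_zero]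
  -- Lipschitz bound constant
  set C : ℝ := ∑ k : Fin n, ‖B k v‖ with hCdef
  have hC0 : 0 ≤ C := Finset.sum_nonneg fun k _ => norm_nonneg _
  have hC : ∀ t : ℝ, ‖(NormedSpace.exp ((t : ℂ) • B) * B) u v‖ ≤ C := by
    intro t
    rw [Matrix.mul_apply]
    refine (norm_sum_le _ _).trans ?_
    refine Finset.sum_le_sum fun k _ => ?_
    rw [norm_mul]
    calc ‖NormedSpace.exp ((t : ℂ) • B) u k‖ * ‖B k v‖
        ≤ 1 * ‖B k v‖ := by
          gcongr
          exact entry_norm_bound_of_unitary (hunit t) u k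
      _ = ‖B k v‖ := one_mul _
  have hlip := aux_lip n B u v C hC
  -- the value at odd multiples of τ
  have hval : ∀ p : ℤ, ‖(NormedSpace.exp ((((2 * (p : ℝ) - 1) * τ : ℝ) : ℂ) • B)) u v‖ = 1 := by
    intro p
    have := hpst p
    rw [hdp] at this
    rw [hsc] at this
    convert this using 4
    push_cast
    ring
  -- density of ℤπ + ℤ(2τ)
  have hπ : Real.pi ≠ 0 := Real.pi_ne_zero
  set S : AddSubgroup ℝ := AddSubgroup.closure ({Real.pi, 2 * τ} : Set ℝ) with hS
  have hdense : Dense (S : Set ℝ) := by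
    rcases S.dense_or_cyclic with h | ⟨a, ha⟩
    · exact h
    · exfalso
      have h1 : Real.pi ∈ S := AddSubgroup.subset_closure (by simp)
      have h2 : 2 * τ ∈ S := AddSubgroup.subset_closure (by simp)
      rw [ha, AddSubgroup.mem_closure_singleton] at h1 h2
      obtain ⟨m, hm⟩ := h1
      obtain ⟨k, hk⟩ := h2
      rw [zsmul_eq_mul] at hm hk
      have hm0 : (m : ℝ) ≠ 0 := by
        rintro h0
        rw [h0, zero_mul] at hm
        exact hπ hm.symm
      have ha0 : a ≠ 0 := by
        rintro rfl
        rw [mul_zero] at hm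
        exact hπ hm.symm
      apply hirr
      refine ⟨(k : ℚ) / (2 * (m : ℚ)), ?_⟩
      have : τ = (k : ℝ) * a / 2 := by linarith [hk]
      rw [this, ← hm]
      push_cast
      field_simp
  -- choose a good approximation
  obtain ⟨y, hyS, hy⟩ := hdense.exists_dist_lt τ (show (0:ℝ) < ε / (C + 1) by positivity)
  obtain ⟨a, b, hab⟩ := AddSubgroup.mem_closure_pair.1 hyS
  refine ⟨a, ?_⟩
  -- rewrite the goal
  have hmapadd : (A₁ + A₂).map (fun x => (x : ℂ)) = M₁ + M₂ := by
    ext i j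
    simp [hM₁, hM₂, Matrix.map_apply, Complex.ofReal_add]
  have hMcomm : Commute ((-(Complex.I * ((a : ℂ) * Real.pi))) • M₁)
      ((-(Complex.I * ((a : ℂ) * Real.pi))) • M₂) := by
    apply Commute.smul_left
    apply Commute.smul_right
    show M₁ * M₂ = M₂ * M₁
    have : ∀ (P Q : Matrix (Fin n) (Fin n) ℝ),
        P.map (fun x => (x : ℂ)) * Q.map (fun x => (x : ℂ))
          = (P * Q).map (fun x => (x : ℂ)) := by
      intro P Q
      ext i j
      simp [Matrix.mul_apply, Matrix.map_apply]
    rw [hM₁, hM₂, this, this, hcomm]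
  rw [hmapadd, smul_add, Matrix.exp_add_of_commute _ _ hMcomm, hper a, one_mul, hdp, hsc]
  -- now estimate
  have key : (((a : ℝ) * Real.pi : ℝ) : ℂ) = (a : ℂ) * Real.pi := by push_cast; ring
  rw [← key]
  set p : ℤ := 1 - b with hp
  have hdist : |(a : ℝ) * Real.pi - (2 * (p : ℝ) - 1) * τ| < ε / (C + 1) := by
    have h1 : (2 * (p : ℝ) - 1) * τ = τ - y + (a : ℝ) * Real.pi := by
      rw [← hab, hp]
      push_cast [zsmul_eq_mul]
      ring
    rw [h1]
    have : (a : ℝ) * Real.pi - (τ - y + (a : ℝ) * Real.pi) = y - τ := by ring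
    rw [this, abs_sub_comm]
    simpa [Real.dist_eq] using hy
  calc |‖(NormedSpace.exp ((((a : ℝ) * Real.pi : ℝ) : ℂ) • B)) u v‖ - 1|
      = |‖(NormedSpace.exp ((((a : ℝ) * Real.pi : ℝ) : ℂ) • B)) u v‖
          - ‖(NormedSpace.exp ((((2 * (p : ℝ) - 1) * τ : ℝ) : ℂ) • B)) u v‖| := by
        rw [hval p]
    _ ≤ ‖(NormedSpace.exp ((((a : ℝ) * Real.pi : ℝ) : ℂ) • B)) u v
          - (NormedSpace.exp ((((2 * (p : ℝ) - 1) * τ : ℝ) : ℂ) • B)) u v‖ :=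
        abs_norm_sub_norm_le _ _
    _ ≤ C * |(a : ℝ) * Real.pi - (2 * (p : ℝ) - 1) * τ| := hlip _ _
    _ ≤ C * (ε / (C + 1)) := mul_le_mul_of_nonneg_left hdist.le hC0
    _ < (C + 1) * (ε / (C + 1)) := by
        have : (0:ℝ) < ε / (C + 1) := by positivity
        nlinarith
    _ = ε := by field_simp
end
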